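/- arXiv:1410.2006 — 4 statements merged into one kernel-verified Lean document; each statement's English description precedes it below -/
import Mathlib

section
/- Consider N linear subsystems ẋ_i = A_i x_i + B_i u_i, y_i = C_i x_i, where each C_i ∈ ℝ^{p_i × n_i} has full row rank, interconnected through u = M¹¹y + M¹²d, e = M²¹y + M²²d, where the diagonal blocks M¹¹_{ii} of M¹¹ (mapping y_i to u_i) are zero and, for each i, the rows of the block of M mapping (y,d) to u_i (i.e., the rows of [M¹¹_{i1} ⋯ M¹¹_{iN} M¹²_i]) are linearly independent. Let W be a real symmetric matrix. Then the following are equivalent: (i) there exist real symmetric positive semidefinite P_1,…,P_N such that for all x_1,…,x_N and d, with y_i = C_i x_i, u = M¹¹y + M¹²d, e = M²¹y + M²²d, one has ∑_{i=1}^N ( x_iᵀ(A_iᵀP_i + P_iA_i)x_i + 2 x_iᵀ P_i B_i u_i ) ≤ [d;e]ᵀ W [d;e]; (ii) there exist real symmetric matrices X_1,…,X_N and positive semidefinite P_1,…,P_N such that for each i and all x_i, u_i, with y_i = C_i x_i, x_iᵀ(A_iᵀP_i + P_iA_i)x_i + 2 x_iᵀ P_i B_i u_i ≤ [u_i;y_i]ᵀ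 X_i [u_i;y_i], and for all y, d, with u = M¹¹y + M¹²d, e = M²¹y + M²²d, ∑_{i=1}^N [u_i;y_i]ᵀ X_i [u_i;y_i] ≤ [d;e]ᵀ W [d;e]. -/
/-!
(ii) ⇒ (i) is summation of the local inequalities followed by the global constraint at `y = Cx`.

For (i) ⇒ (ii), let `Fᵢ` be the symmetric bilinear form on pairs `(xᵢ, uᵢ)` whose quadratic form
is `xᵢᵀ(AᵢᵀPᵢ + PᵢAᵢ)xᵢ + 2xᵢᵀPᵢBᵢuᵢ`, and `Φᵢ(x, u) = [u; Cᵢx]`. Assumption 1 lets us prescribe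
`uᵢ` while `xᵢ` moves along a line `w + τv` with `Cᵢv = 0` and nothing else in the interconnection
changes; the global bound then forces `Fᵢ ≤ 0` on `ker Φᵢ` and every null vector of `Fᵢ` in
`ker Φᵢ` to lie in the radical of `Fᵢ`. Hence `ker Φᵢ` and its `Fᵢ`-orthogonal complement span the
whole space, so `Φᵢ` has a linear right inverse `sᵢ` with image `Fᵢ`-orthogonal to `ker Φᵢ`, and
`sᵢ` picks a maximiser of `Fᵢ` in every fibre of `Φᵢ`. The local supply rate `Xᵢ` is `Fᵢ` pulled
back along `sᵢ`; it dominates `Fᵢ` and is attained on every fibre, which turns (i) into the global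
constraint on the `Xᵢ`.
-/

open Function Matrix

namespace LinearMap.BilinForm

open Module Submodule

variable {K V F : Type*} [Field K] [AddCommGroup V] [Module K V] [FiniteDimensional K V]
  [AddCommGroup F] [Module K F] {B : LinearMap.BilinForm K V}

theorem sup_orthogonal_eq_top {W : Submodule K V} (hB : B.IsRefl)
    (hW : W ⊓ B.orthogonal W ≤ B.orthogonal ⊤) : W ⊔ B.orthogonal W = ⊤ := by
  refine eq_top_of_finrank_eq ((finrank_le _).antisymm ?_)
  have := finrank_mono (le_inf inf_le_left hW)
  have := finrank_sup_add_finrank_inf_eq W (B.orthogonal W)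
  have := finrank_add_finrank_orthogonal hB W
  omega

theorem exists_rightInverse_forall_apply_self_le [LinearOrder K] [IsStrictOrderedRing K]
    (hB : B.IsSymm) {Φ : V →ₗ[K] F} (hΦ : Surjective Φ) (hneg : ∀ k ∈ ker Φ, B k k ≤ 0)
    (hrad : ∀ k ∈ ker Φ, B k k = 0 → ∀ x, B k x = 0) :
    ∃ s : F →ₗ[K] V, Φ ∘ₗ s = id ∧ ∀ x, B x x ≤ B (s (Φ x)) (s (Φ x)) := by
  have hsup : ker Φ ⊔ B.orthogonal (ker Φ) = ⊤ :=
    sup_orthogonal_eq_top hB.isRefl fun k ⟨hk, hk'⟩ x _ =>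
      hB.isRefl _ _ (hrad k hk (hk' k hk) x)
  have hsurj : range (Φ ∘ₗ (B.orthogonal (ker Φ)).subtype) = ⊤ := by
    refine range_eq_top.2 fun w => ?_
    obtain ⟨x, rfl⟩ := hΦ w
    obtain ⟨k, hk, o, ho, rfl⟩ := mem_sup.1 (hsup ▸ mem_top : x ∈ ker Φ ⊔ B.orthogonal (ker Φ))
    exact ⟨⟨o, ho⟩, by simp [mem_ker.1 hk]⟩
  obtain ⟨g, hg⟩ := exists_rightInverse_of_surjective _ hsurj
  refine ⟨(B.orthogonal (ker Φ)).subtype ∘ₗ g, by rw [← comp_assoc, hg], fun x => ?_⟩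
  set o := (g (Φ x) : V)
  have ho : o ∈ B.orthogonal (ker Φ) := (g (Φ x)).2
  have hΦo : Φ o = Φ x := congr($hg (Φ x))
  have hk : x - o ∈ ker Φ := by rw [mem_ker, map_sub, hΦo, sub_self]
  have hko : B (x - o) o = 0 := ho _ hk
  have hok : B o (x - o) = 0 := by rw [hB.eq]; exact hko
  calc B x x = B o o + B o (x - o) + B (x - o) o + B (x - o) (x - o) := by
        simp only [map_sub, LinearMap.sub_apply]; ring
    _ ≤ B o o := by linarith [hneg _ hk]

end LinearMap.BilinForm

theorem nonpos_of_forall_mul_add_mul_sq_le {β γ c : ℝ} (h : ∀ τ : ℝ, β * τ + γ * τ ^ 2 ≤ c) :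
    γ ≤ 0 := by
  by_contra! hγ
  have hsq : ∀ τ, γ * τ ^ 2 ≤ c := fun τ => by linarith [h τ, h (-τ)]
  have := hsq √((|c| + 1) / γ)
  rw [Real.sq_sqrt (by positivity), mul_div_cancel₀ _ hγ.ne'] at this
  linarith [le_abs_self c]

theorem eq_zero_of_forall_mul_le {β c : ℝ} (h : ∀ τ : ℝ, β * τ ≤ c) : β = 0 := by
  by_contra hβ
  have := h ((|c| + 1) / β)
  rw [mul_div_cancel₀ _ hβ] at this
  linarith [le_abs_self c]

section Interconnection

open Finset

variable {ι D : Type*} [Fintype ι] [DecidableEq ι] {X U Y : ι → Type*}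
  [∀ i, AddCommGroup (X i)] [∀ i, Module ℝ (X i)] [∀ i, AddCommGroup (U i)]
  [∀ i, Module ℝ (U i)] [∀ i, AddCommGroup (Y i)] [∀ i, Module ℝ (Y i)]
  {F : ∀ i, LinearMap.BilinForm ℝ (X i × U i)} {C : ∀ i, X i →ₗ[ℝ] Y i}
  {input : ∀ i, (∀ j, Y j) → D → U i} {g : (∀ j, Y j) → D → ℝ}

theorem exists_forall_le_of_interconnection (hF : ∀ i, (F i).IsSymm)
    (hC : ∀ i, Surjective (C i))
    (hinput_update : ∀ i y z d, input i (update y i z) d = input i y d)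
    (hinput_surj : ∀ i u, ∃ y d, input i y d = u)
    (hglobal : ∀ (x : ∀ i, X i) d, ∑ i, F i (x i, input i (fun j => C j (x j)) d)
      (x i, input i (fun j => C j (x j)) d) ≤ g (fun j => C j (x j)) d)
    {i : ι} {v : X i} (hv : C i v = 0) (a : X i × U i) :
    ∃ c, ∀ τ : ℝ, 2 * F i (v, 0) a * τ + F i (v, 0) (v, 0) * τ ^ 2 ≤ c := by
  obtain ⟨y, d, hyd⟩ := hinput_surj i a.2
  choose xs hxs using fun j => hC j (y j)
  set y' := update y i (C i a.1)
  have hy' : ∀ τ : ℝ, (fun j => C j (update xs i (a.1 + τ • v) j)) = y' := fun τ => by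
    ext j
    rcases eq_or_ne j i with rfl | hj
    · simp [y', hv]
    · simp [y', hj, hxs]
  set G : ∀ j, X j → ℝ := fun j z => F j (z, input j y' d) (z, input j y' d)
  refine ⟨g y' d - ∑ j ∈ univ \ {i}, G j (xs j) - F i a a, fun τ => ?_⟩
  have h : ∑ j, G j (update xs i (a.1 + τ • v) j) ≤ g y' d := by
    simpa only [hy' τ] using hglobal (update xs i (a.1 + τ • v)) d
  have hsplit : ∑ j, G j (update xs i (a.1 + τ • v) j) =
      G i (a.1 + τ • v) + ∑ j ∈ univ \ {i}, G j (xs j) := by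
    simp only [apply_update G]
    exact sum_update_of_mem (mem_univ i) _ _
  have hexp : G i (a.1 + τ • v) =
      F i a a + 2 * F i (v, 0) a * τ + F i (v, 0) (v, 0) * τ ^ 2 := by
    have : (a.1 + τ • v, input i y' d) = a + τ • (v, 0) := by
      ext <;> simp [y', hinput_update, hyd]
    simp only [G, this, map_add, map_smul, LinearMap.add_apply, LinearMap.smul_apply, smul_eq_mul,
      (hF i).eq a (v, 0)]
    ring
  linarith

theorem apply_self_nonpos_and_isOrtho_of_interconnection (hF : ∀ i, (F i).IsSymm)
    (hC : ∀ i, Surjective (C i))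
    (hinput_update : ∀ i y z d, input i (update y i z) d = input i y d)
    (hinput_surj : ∀ i u, ∃ y d, input i y d = u)
    (hglobal : ∀ (x : ∀ i, X i) d, ∑ i, F i (x i, input i (fun j => C j (x j)) d)
      (x i, input i (fun j => C j (x j)) d) ≤ g (fun j => C j (x j)) d)
    {i : ι} {v : X i} (hv : C i v = 0) :
    F i (v, 0) (v, 0) ≤ 0 ∧ (F i (v, 0) (v, 0) = 0 → ∀ a, F i (v, 0) a = 0) := by
  have hbound := exists_forall_le_of_interconnection hF hC hinput_update hinput_surj hglobal hv
  refine ⟨?_, fun h0 a => ?_⟩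
  · obtain ⟨c, hc⟩ := hbound 0
    exact nonpos_of_forall_mul_add_mul_sq_le hc
  · obtain ⟨c, hc⟩ := hbound a
    simp only [h0, zero_mul, add_zero] at hc
    linarith [eq_zero_of_forall_mul_le hc]

end Interconnection

theorem Matrix.mulVec_surjective_of_linearIndependent_rows {K m k : Type*} [Field K]
    [Fintype m] [Fintype k] {A : Matrix m k K} (hA : LinearIndependent K A.row) :
    Surjective A.mulVec := by
  have hrank : A.rank = Fintype.card m := by
    rw [rank_eq_finrank_span_row, finrank_span_eq_card hA]
  rw [← coe_mulVecLin, ← LinearMap.range_eq_top]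
  apply Submodule.eq_top_of_finrank_eq
  rw [← rank, hrank, Module.finrank_fintype_fun_eq_card]

theorem exists_sum_mulVec_add_mulVec_eq {ι k l : Type*} [Fintype ι] [Fintype k] [Fintype l]
    {P : ι → Type*} [∀ j, Fintype (P j)] {M : ∀ j, Matrix k (P j) ℝ} {M' : Matrix k l ℝ}
    (h : LinearIndependent ℝ fun r =>
      Sum.elim (fun jl : Σ j, P j => M jl.1 r jl.2) (fun l => M' r l)) (u : k → ℝ) :
    ∃ (y : ∀ j, P j → ℝ) (d : l → ℝ), ∑ j, M j *ᵥ y j + M' *ᵥ d = u := by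
  obtain ⟨ζ, rfl⟩ := mulVec_surjective_of_linearIndependent_rows (A := Matrix.of _) h u
  refine ⟨fun j l => ζ (.inl ⟨j, l⟩), fun l => ζ (.inr l), ?_⟩
  ext r
  simp [mulVec, dotProduct, Fintype.sum_sum_type, ← Finset.univ_sigma_univ, Finset.sum_sigma]

theorem sum_mulVec_update_of_eq_zero {ι k : Type*} [Fintype ι] [DecidableEq ι]
    {P : ι → Type*} [∀ j, Fintype (P j)] {M : ∀ j, Matrix k (P j) ℝ} {i : ι}
    (hM : M i = 0) (y : ∀ j, P j → ℝ) (z : P i → ℝ) :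
    ∑ j, M j *ᵥ update y i z j = ∑ j, M j *ᵥ y j := by
  refine Finset.sum_congr rfl fun j _ => ?_
  rcases eq_or_ne j i with rfl | hj
  · simp [hM]
  · rw [update_of_ne hj]

section StorageRate

variable {n m : Type*} [Fintype n] [Fintype m]

/-- With `Q = AᵀP + PA` and `R = PB`, its quadratic form `xᵀQx + 2xᵀRu` is the derivative of the
storage `xᵀPx` along `ẋ = Ax + Bu`. -/
def storageRateForm (Q : Matrix n n ℝ) (R : Matrix n m ℝ) :
    LinearMap.BilinForm ℝ ((n → ℝ) × (m → ℝ)) :=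
  LinearMap.mk₂ ℝ (fun a b => a.1 ⬝ᵥ (Q *ᵥ b.1) + a.1 ⬝ᵥ (R *ᵥ b.2) + b.1 ⬝ᵥ (R *ᵥ a.2))
    (fun a a' b => by
      simp only [Prod.fst_add, Prod.snd_add, add_dotProduct, mulVec_add, dotProduct_add]; ring)
    (fun c a b => by
      simp only [Prod.smul_fst, Prod.smul_snd, smul_dotProduct, mulVec_smul, dotProduct_smul,
        smul_eq_mul]; ring)
    (fun a b b' => by
      simp only [Prod.fst_add, Prod.snd_add, add_dotProduct, mulVec_add, dotProduct_add]; ring)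
    (fun c a b => by
      simp only [Prod.smul_fst, Prod.smul_snd, smul_dotProduct, mulVec_smul, dotProduct_smul,
        smul_eq_mul]; ring)

theorem storageRateForm_apply (Q : Matrix n n ℝ) (R : Matrix n m ℝ) (a b : (n → ℝ) × (m → ℝ)) :
    storageRateForm Q R a b = a.1 ⬝ᵥ (Q *ᵥ b.1) + a.1 ⬝ᵥ (R *ᵥ b.2) + b.1 ⬝ᵥ (R *ᵥ a.2) :=
  rfl

theorem storageRateForm_apply_self (Q : Matrix n n ℝ) (R : Matrix n m ℝ) (x : n → ℝ)
    (u : m → ℝ) :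
    storageRateForm Q R (x, u) (x, u) = x ⬝ᵥ (Q *ᵥ x) + 2 * (x ⬝ᵥ (R *ᵥ u)) := by
  rw [storageRateForm_apply]; ring

theorem isSymm_storageRateForm {Q : Matrix n n ℝ} (hQ : Q.IsSymm) (R : Matrix n m ℝ) :
    (storageRateForm Q R).IsSymm := by
  refine ⟨fun a b => ?_⟩
  rw [storageRateForm_apply, storageRateForm_apply, dotProduct_mulVec a.1, ← mulVec_transpose, hQ,
    dotProduct_comm]
  ring

end StorageRate

section AppendOutput

variable {n : Type*} [Fintype n] {m p : ℕ}

def appendOutput (C : Matrix (Fin p) n ℝ) : (n → ℝ) × (Fin m → ℝ) →ₗ[ℝ] (Fin (m + p) → ℝ) where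
  toFun a := Fin.append a.2 (C *ᵥ a.1)
  map_add' a b := by
    ext k; refine Fin.addCases (fun i => ?_) (fun j => ?_) k <;> simp [mulVec_add]
  map_smul' c a := by
    ext k; refine Fin.addCases (fun i => ?_) (fun j => ?_) k <;> simp [mulVec_smul]

theorem appendOutput_apply (C : Matrix (Fin p) n ℝ) (x : n → ℝ) (u : Fin m → ℝ) :
    appendOutput C (x, u) = Fin.append u (C *ᵥ x) :=
  rfl

theorem appendOutput_eq_append_iff {C : Matrix (Fin p) n ℝ} {x : n → ℝ} {u u' : Fin m → ℝ}
    {y : Fin p → ℝ} : appendOutput C (x, u) = Fin.append u' y ↔ u = u' ∧ C *ᵥ x = y := by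
  change Fin.appendEquiv m p (u, C *ᵥ x) = Fin.appendEquiv m p (u', y) ↔ _
  exact (Fin.appendEquiv m p).injective.eq_iff.trans Prod.mk_inj

theorem appendOutput_eq_zero_iff {C : Matrix (Fin p) n ℝ} {x : n → ℝ} {u : Fin m → ℝ} :
    appendOutput C (x, u) = 0 ↔ u = 0 ∧ C *ᵥ x = 0 := by
  have h0 : (0 : Fin (m + p) → ℝ) = Fin.append 0 0 := by
    ext k; refine Fin.addCases (fun i => ?_) (fun j => ?_) k <;> simp
  rw [h0, appendOutput_eq_append_iff]

theorem surjective_appendOutput {C : Matrix (Fin p) n ℝ} (hC : Surjective C.mulVec) :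
    Surjective (appendOutput (m := m) C) := by
  intro w
  obtain ⟨x, hx⟩ := hC fun j => w (Fin.natAdd m j)
  exact ⟨(x, fun i => w (Fin.castAdd p i)),
    by rw [appendOutput_apply, hx, Fin.append_castAdd_natAdd]⟩

theorem exists_tight_supply_matrix {B : LinearMap.BilinForm ℝ ((n → ℝ) × (Fin m → ℝ))}
    (hB : B.IsSymm) {C : Matrix (Fin p) n ℝ} (hC : Surjective C.mulVec)
    (hker : ∀ v, C *ᵥ v = 0 →
      B (v, 0) (v, 0) ≤ 0 ∧ (B (v, 0) (v, 0) = 0 → ∀ a, B (v, 0) a = 0)) :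
    ∃ X : Matrix (Fin (m + p)) (Fin (m + p)) ℝ, X.IsSymm ∧
      (∀ x u, B (x, u) (x, u) ≤ Fin.append u (C *ᵥ x) ⬝ᵥ (X *ᵥ Fin.append u (C *ᵥ x))) ∧
      ∀ u y, ∃ x, C *ᵥ x = y ∧ B (x, u) (x, u) = Fin.append u y ⬝ᵥ (X *ᵥ Fin.append u y) := by
  have hmem_ker : ∀ k ∈ LinearMap.ker (appendOutput (m := m) C), ∃ v, C *ᵥ v = 0 ∧ k = (v, 0) := by
    rintro ⟨x, u⟩ hk
    obtain ⟨rfl, hx⟩ := appendOutput_eq_zero_iff.1 hk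
    exact ⟨x, hx, rfl⟩
  obtain ⟨s, hs, hle⟩ := LinearMap.BilinForm.exists_rightInverse_forall_apply_self_le hB
    (surjective_appendOutput hC)
    (fun k hk => by obtain ⟨v, hv, rfl⟩ := hmem_ker k hk; exact (hker v hv).1)
    (fun k hk => by obtain ⟨v, hv, rfl⟩ := hmem_ker k hk; exact (hker v hv).2)
  have hquad : ∀ w, w ⬝ᵥ (LinearMap.toMatrix₂' ℝ (B.compl₁₂ s s) *ᵥ w) = B (s w) (s w) :=
    fun w => by
      rw [← Matrix.toLinearMap₂'_apply', Matrix.toLinearMap₂'_toMatrix', LinearMap.compl₁₂_apply]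
  refine ⟨LinearMap.toMatrix₂' ℝ (B.compl₁₂ s s), ?_, fun x u => ?_, fun u y => ?_⟩
  · ext i j
    simp [LinearMap.toMatrix₂'_apply, hB.eq]
  · rw [hquad]
    exact hle (x, u)
  · set w := Fin.append u y
    obtain ⟨hu, hy⟩ := appendOutput_eq_append_iff.1 (congr($hs w) : appendOutput C (s w) = w)
    refine ⟨(s w).1, hy, ?_⟩
    rw [hquad, show ((s w).1, u) = s w from Prod.ext rfl hu.symm]

end AppendOutput

theorem stmt_2_general {N : ℕ} {n m p : Fin N → ℕ} {pd me : ℕ}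
    (A : ∀ i, Matrix (Fin (n i)) (Fin (n i)) ℝ)
    (B : ∀ i, Matrix (Fin (n i)) (Fin (m i)) ℝ)
    (C : ∀ i, Matrix (Fin (p i)) (Fin (n i)) ℝ)
    (hC : ∀ i, LinearIndependent ℝ (fun r : Fin (p i) => C i r))
    (M11 : ∀ i j, Matrix (Fin (m i)) (Fin (p j)) ℝ)
    (M12 : ∀ i, Matrix (Fin (m i)) (Fin pd) ℝ)
    (M21 : ∀ j, Matrix (Fin me) (Fin (p j)) ℝ)
    (M22 : Matrix (Fin me) (Fin pd) ℝ)
    (hMdiag : ∀ i, M11 i i = 0)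
    (hMrows : ∀ i, LinearIndependent ℝ (fun r : Fin (m i) =>
      Sum.elim (fun jl : Σ j, Fin (p j) => M11 i jl.1 r jl.2) (fun l : Fin pd => M12 i r l)))
    (W : Matrix (Fin (pd + me)) (Fin (pd + me)) ℝ) :
    (∃ P : ∀ i, Matrix (Fin (n i)) (Fin (n i)) ℝ,
      (∀ i, (P i).PosSemidef) ∧
      (∀ (x : ∀ i, Fin (n i) → ℝ) (d : Fin pd → ℝ),
        (∑ i, ((x i) ⬝ᵥ (((A i)ᵀ * P i + P i * A i) *ᵥ (x i))
              + 2 * ((x i) ⬝ᵥ ((P i * B i) *ᵥ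
                  ((∑ j, (M11 i j) *ᵥ ((C j) *ᵥ (x j))) + (M12 i) *ᵥ d))))) ≤
          (Fin.append d ((∑ j, (M21 j) *ᵥ ((C j) *ᵥ (x j))) + M22 *ᵥ d)) ⬝ᵥ
            (W *ᵥ (Fin.append d ((∑ j, (M21 j) *ᵥ ((C j) *ᵥ (x j))) + M22 *ᵥ d)))))
    ↔
    (∃ (X : ∀ i, Matrix (Fin (m i + p i)) (Fin (m i + p i)) ℝ)
       (P : ∀ i, Matrix (Fin (n i)) (Fin (n i)) ℝ),
      (∀ i, (X i).IsSymm) ∧ (∀ i, (P i).PosSemidef) ∧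
      (∀ i (x : Fin (n i) → ℝ) (u : Fin (m i) → ℝ),
        x ⬝ᵥ (((A i)ᵀ * P i + P i * A i) *ᵥ x) + 2 * (x ⬝ᵥ ((P i * B i) *ᵥ u)) ≤
          (Fin.append u ((C i) *ᵥ x)) ⬝ᵥ ((X i) *ᵥ (Fin.append u ((C i) *ᵥ x)))) ∧
      (∀ (y : ∀ j, Fin (p j) → ℝ) (d : Fin pd → ℝ),
        (∑ i, (Fin.append ((∑ j, (M11 i j) *ᵥ (y j)) + (M12 i) *ᵥ d) (y i)) ⬝ᵥ
            ((X i) *ᵥ (Fin.append ((∑ j, (M11 i j) *ᵥ (y j)) + (M12 i) *ᵥ d) (y i)))) ≤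
          (Fin.append d ((∑ j, (M21 j) *ᵥ (y j)) + M22 *ᵥ d)) ⬝ᵥ
            (W *ᵥ (Fin.append d ((∑ j, (M21 j) *ᵥ (y j)) + M22 *ᵥ d))))) := by
  constructor
  · rintro ⟨P, hP, hglobal⟩
    have hF : ∀ i, (storageRateForm ((A i)ᵀ * P i + P i * A i) (P i * B i)).IsSymm := fun i => by
      have hPsymm : (P i)ᵀ = P i := isHermitian_iff_isSymm.1 (hP i).isHermitian
      refine isSymm_storageRateForm (show _ᵀ = _ from ?_) _
      rw [transpose_add, transpose_mul, transpose_mul, transpose_transpose, hPsymm, add_comm]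
    have hCsurj i := mulVec_surjective_of_linearIndependent_rows (hC i)
    have hker i v (hv : C i *ᵥ v = 0) := apply_self_nonpos_and_isOrtho_of_interconnection
      (C := fun i => (C i).mulVecLin) (input := fun i y d => ∑ j, M11 i j *ᵥ y j + M12 i *ᵥ d)
      (g := fun y d => Fin.append d (∑ j, M21 j *ᵥ y j + M22 *ᵥ d) ⬝ᵥ
        (W *ᵥ Fin.append d (∑ j, M21 j *ᵥ y j + M22 *ᵥ d)))
      hF hCsurj (fun i y z d => by rw [sum_mulVec_update_of_eq_zero (hMdiag i)])
      (fun i => exists_sum_mulVec_add_mulVec_eq (hMrows i)) (fun x d => by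
        simpa only [storageRateForm_apply_self, mulVecLin_apply] using hglobal x d) hv
    choose X hXsymm hXle hXtight using
      fun i => exists_tight_supply_matrix (hF i) (hCsurj i) (hker i)
    refine ⟨X, P, hXsymm, hP,
      fun i x u => by simpa only [storageRateForm_apply_self] using hXle i x u, fun y d => ?_⟩
    choose x hCx hx using fun i => hXtight i (∑ j, M11 i j *ᵥ y j + M12 i *ᵥ d) (y i)
    simp only [← hx, storageRateForm_apply_self]
    simpa only [hCx] using hglobal x d
  · rintro ⟨X, P, -, hP, hloc, hglob⟩
    exact ⟨P, hP, fun x d => (Finset.sum_le_sum fun i _ => hloc i _ _).trans (hglob _ d)⟩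

/-- **Theorem 1 (equivalence for linear subsystems).** `N` linear subsystems
`ẋᵢ = Aᵢxᵢ + Bᵢuᵢ`, `yᵢ = Cᵢxᵢ` with each `Cᵢ` of full row rank are interconnected by
`u = M¹¹y + M¹²d`, `e = M²¹y + M²²d` (blockwise), where the diagonal blocks `M¹¹ᵢᵢ` are
zero and for each `i` the rows of `[M¹¹ᵢ₁ ⋯ M¹¹ᵢ_N  M¹²ᵢ]` are linearly independent
(Assumption 1). For a symmetric `W`, the following are equivalent:
(i) there exist PSD `Pᵢ` such that `V = ∑ xᵢᵀPᵢxᵢ` certifies global dissipativity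
    w.r.t. `[d;e]ᵀW[d;e]`;
(ii) there exist symmetric `Xᵢ` and PSD `Pᵢ` such that each subsystem is dissipative
    w.r.t. `[uᵢ;yᵢ]ᵀXᵢ[uᵢ;yᵢ]` with storage function `xᵢᵀPᵢxᵢ`, and the `Xᵢ` satisfy
    the global constraint. -/
theorem stmt_2 {N : ℕ} {n m p : Fin N → ℕ} {pd me : ℕ}
    (A : ∀ i, Matrix (Fin (n i)) (Fin (n i)) ℝ)
    (B : ∀ i, Matrix (Fin (n i)) (Fin (m i)) ℝ)
    (C : ∀ i, Matrix (Fin (p i)) (Fin (n i)) ℝ)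
    (hC : ∀ i, LinearIndependent ℝ (fun r : Fin (p i) => C i r))
    (M11 : ∀ i j, Matrix (Fin (m i)) (Fin (p j)) ℝ)
    (M12 : ∀ i, Matrix (Fin (m i)) (Fin pd) ℝ)
    (M21 : ∀ j, Matrix (Fin me) (Fin (p j)) ℝ)
    (M22 : Matrix (Fin me) (Fin pd) ℝ)
    (hMdiag : ∀ i, M11 i i = 0)
    (hMrows : ∀ i, LinearIndependent ℝ (fun r : Fin (m i) =>
      Sum.elim (fun jl : Σ j, Fin (p j) => M11 i jl.1 r jl.2) (fun l : Fin pd => M12 i r l)))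
    (W : Matrix (Fin (pd + me)) (Fin (pd + me)) ℝ) (hWsymm : W.IsSymm) :
    (∃ P : ∀ i, Matrix (Fin (n i)) (Fin (n i)) ℝ,
      (∀ i, (P i).PosSemidef) ∧
      (∀ (x : ∀ i, Fin (n i) → ℝ) (d : Fin pd → ℝ),
        (∑ i, ((x i) ⬝ᵥ (((A i)ᵀ * P i + P i * A i) *ᵥ (x i))
              + 2 * ((x i) ⬝ᵥ ((P i * B i) *ᵥ
                  ((∑ j, (M11 i j) *ᵥ ((C j) *ᵥ (x j))) + (M12 i) *ᵥ d))))) ≤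
          (Fin.append d ((∑ j, (M21 j) *ᵥ ((C j) *ᵥ (x j))) + M22 *ᵥ d)) ⬝ᵥ
            (W *ᵥ (Fin.append d ((∑ j, (M21 j) *ᵥ ((C j) *ᵥ (x j))) + M22 *ᵥ d)))))
    ↔
    (∃ (X : ∀ i, Matrix (Fin (m i + p i)) (Fin (m i + p i)) ℝ)
       (P : ∀ i, Matrix (Fin (n i)) (Fin (n i)) ℝ),
      (∀ i, (X i).IsSymm) ∧ (∀ i, (P i).PosSemidef) ∧
      (∀ i (x : Fin (n i) → ℝ) (u : Fin (m i) → ℝ),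
        x ⬝ᵥ (((A i)ᵀ * P i + P i * A i) *ᵥ x) + 2 * (x ⬝ᵥ ((P i * B i) *ᵥ u)) ≤
          (Fin.append u ((C i) *ᵥ x)) ⬝ᵥ ((X i) *ᵥ (Fin.append u ((C i) *ᵥ x)))) ∧
      (∀ (y : ∀ j, Fin (p j) → ℝ) (d : Fin pd → ℝ),
        (∑ i, (Fin.append ((∑ j, (M11 i j) *ᵥ (y j)) + (M12 i) *ᵥ d) (y i)) ⬝ᵥ
            ((X i) *ᵥ (Fin.append ((∑ j, (M11 i j) *ᵥ (y j)) + (M12 i) *ᵥ d) (y i)))) ≤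
          (Fin.append d ((∑ j, (M21 j) *ᵥ (y j)) + M22 *ᵥ d)) ⬝ᵥ
            (W *ᵥ (Fin.append d ((∑ j, (M21 j) *ᵥ (y j)) + M22 *ᵥ d))))) :=
  stmt_2_general A B C hC M11 M12 M21 M22 hMdiag hMrows W
end

section
/- Consider N subsystems, where subsystem i has dynamics ẋ_i = f_i(x_i,u_i), y_i = h_i(x_i,u_i), interconnected through u = M¹¹y + M¹²d, e = M²¹y + M²²d. For each i let (Â_i,B̂_i,Ĉ_i,D̂_i) be matrices (the realization of a filter Ψ_i driven by [u_i;y_i] with state η_i) and X_i a real symmetric matrix, and suppose there is a differentiable V_i(x_i,η_i) ≥ 0 with V_i(0,0)=0 such that for all x_i, η_i, u_i, with y_i = h_i(x_i,u_i), ∇_{x_i}V_iᵀ f_i(x_i,u_i) + ∇_{η_i}V_iᵀ(Â_iη_i + B̂_i[u_i;y_i]) ≤ (Ĉ_iη_i + D̂_i[u_i;y_i])ᵀ X_i (Ĉ_iη_i + D̂_i[u_i;y_i]). Let (Â_W,B̂_W,Ĉ_W,D̂_W) be matrices (the realization of a global filter Ψ_W driven by [d;e] with state η_W), W a real symmetric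 matrix, and define Â = diag(Â_1,…,Â_N,Â_W), Ĉ = diag(Ĉ_1,…,Ĉ_N,Ĉ_W), and B̂, D̂ as diag(B̂_1,…,B̂_N,B̂_W) and diag(D̂_1,…,D̂_N,D̂_W) composed with the map (y,d) ↦ (u_1,y_1,…,u_N,y_N,d,e) induced by the interconnection. Suppose there exists a symmetric positive semidefinite P with [ÂᵀP + PÂ, PB̂; B̂ᵀP, 0] + [Ĉ D̂]ᵀ Q [Ĉ D̂] ⪯ 0, where Q = diag(X_1,…,X_N,−W). Then for all x_1,…,x_N, η_1,…,η_N, η_W, u_1,…,u_N and d satisfying y_i = h_i(x_i,u_i) and u = M¹¹y + M¹²d, with e = M²¹y + M²²d and η = (η_1,…,η_N,η_W), one has 2ηᵀP(Âη + B̂[y;d]) + ∑_{i=1}^N ( ∇_{x_i}V_iᵀ f_i(x_i,u_i) + ∇_{η_i}V_iᵀ(Â_iη_i + B̂_i[u_i;y_i]) ) ≤ (Ĉ_Wη_W + D̂_W[d;e])ᵀ W (Ĉ_Wη_W + D̂_W[d;e]); that is, the nonnegative function ηᵀPη + ∑_i V_i(x_i,η_i) certifies that the interconnected system satisfies the global integral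 quadratic constraint defined by Ψ_W and W. -/
open Matrix

/-- The matrix `T` realizing the map `(y,d) ↦ (u₁,y₁,…,u_N,y_N,d,e)` induced by the
interconnection `u = M¹¹y + M¹²d`, `e = M²¹y + M²²d`. -/
def interMap {N : ℕ} {m p : Fin N → ℕ} {pd me : ℕ}
    (M11 : ∀ i j, Matrix (Fin (m i)) (Fin (p j)) ℝ)
    (M12 : ∀ i, Matrix (Fin (m i)) (Fin pd) ℝ)
    (M21 : ∀ j, Matrix (Fin me) (Fin (p j)) ℝ)
    (M22 : Matrix (Fin me) (Fin pd) ℝ) :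
    Matrix ((Σ i, Fin (m i + p i)) ⊕ Fin (pd + me)) ((Σ j, Fin (p j)) ⊕ Fin pd) ℝ :=
  Matrix.of fun a s =>
    match a with
    | Sum.inl ⟨i, k⟩ =>
        Fin.addCases
          (fun k1 : Fin (m i) =>
            Sum.elim (fun jl : Σ j, Fin (p j) => M11 i jl.1 k1 jl.2)
              (fun l : Fin pd => M12 i k1 l) s)
          (fun k2 : Fin (p i) =>
            if s = Sum.inl ⟨i, k2⟩ then (1 : ℝ) else 0) k
    | Sum.inr j =>
        Fin.addCases
          (fun j1 : Fin pd => if s = Sum.inr j1 then (1 : ℝ) else 0)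
          (fun j2 : Fin me =>
            Sum.elim (fun jl : Σ j', Fin (p j') => M21 jl.1 j2 jl.2)
              (fun l : Fin pd => M22 j2 l) s) j


/-!
Evaluate the LMI at `v = (η, [y; d])`. Since `P` is symmetric, its first block contributes
`2 ηᵀP(Âη + B̂[y;d])`. The interconnection turns `[y; d]` into `(u₁,y₁,…,u_N,y_N,d,e)`, so
`[Ĉ D̂] v` is the vector of filter outputs `(z₁,…,z_N,z_W)` and the second block contributes
`∑ zᵢᵀXᵢzᵢ - z_WᵀWz_W`. Adding the local inequalities `V̇ᵢ ≤ zᵢᵀXᵢzᵢ` gives the claim.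
-/

namespace Matrix

section Quadratic

variable {R : Type*} [CommSemiring R] {n q r s : Type*} [Fintype n] [Fintype q]

theorem dotProduct_transpose_mul_mul_mulVec (M : Matrix q n R) (Q : Matrix q q R) (v : n → R) :
    v ⬝ᵥ (Mᵀ * Q * M) *ᵥ v = (M *ᵥ v) ⬝ᵥ Q *ᵥ (M *ᵥ v) := by
  rw [← mulVec_mulVec, ← mulVec_mulVec, dotProduct_mulVec, vecMul_transpose]

theorem IsSymm.dotProduct_mulVec_comm {P : Matrix n n R} (hP : P.IsSymm) (x y : n → R) :
    x ⬝ᵥ P *ᵥ y = y ⬝ᵥ P *ᵥ x := by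
  conv_lhs => rw [← hP.eq]
  exact dotProduct_transpose_mulVec P x y

theorem IsSymm.sumElim_dotProduct_fromBlocks_mulVec_sumElim {P : Matrix n n R} (hP : P.IsSymm)
    (A : Matrix n n R) (B : Matrix n q R) (a : n → R) (b : q → R) :
    Sum.elim a b ⬝ᵥ
        Matrix.fromBlocks (Aᵀ * P + P * A) (P * B) (Bᵀ * P) 0 *ᵥ Sum.elim a b =
      2 * (a ⬝ᵥ P *ᵥ (A *ᵥ a + B *ᵥ b)) := by
  have hA : a ⬝ᵥ Aᵀ *ᵥ P *ᵥ a = a ⬝ᵥ P *ᵥ A *ᵥ a := by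
    rw [dotProduct_transpose_mulVec, dotProduct_comm, hP.dotProduct_mulVec_comm]
  have hB : b ⬝ᵥ Bᵀ *ᵥ P *ᵥ a = a ⬝ᵥ P *ᵥ B *ᵥ b := by
    rw [dotProduct_transpose_mulVec, dotProduct_comm, hP.dotProduct_mulVec_comm]
  rw [fromBlocks_mulVec, sumElim_dotProduct_sumElim]
  simp only [Sum.elim_comp_inl, Sum.elim_comp_inr, zero_mulVec, add_zero, add_mulVec,
    dotProduct_add, ← mulVec_mulVec, mulVec_add]
  rw [hA, hB]
  ring

theorem fromBlocks_zero_zero_mulVec_sumElim (A : Matrix r n R) (D : Matrix s q R)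
    (x : n → R) (y : q → R) :
    fromBlocks A 0 0 D *ᵥ Sum.elim x y = Sum.elim (A *ᵥ x) (D *ᵥ y) := by
  simp [fromBlocks_mulVec]

end Quadratic

section Sigma

variable {R : Type*} [NonUnitalNonAssocSemiring R] {ι : Type*} [Fintype ι] {n q : ι → Type*}
  [∀ i, Fintype (n i)]

theorem blockDiagonal'_mulVec_sigma [DecidableEq ι] (B : ∀ i, Matrix (q i) (n i) R)
    (v : ∀ i, n i → R) :
    blockDiagonal' B *ᵥ (fun a : Σ i, n i => v a.1 a.2) = fun a => (B a.1 *ᵥ v a.1) a.2 := by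
  funext ⟨i, k⟩
  simp only [mulVec, dotProduct, ← Finset.univ_sigma_univ, Finset.sum_sigma]
  rw [Finset.sum_eq_single i]
  · simp [blockDiagonal'_apply_eq]
  · intro j _ hj
    simp [blockDiagonal'_apply_ne _ _ _ (Ne.symm hj)]
  · simp

theorem sigma_dotProduct_sigma (v w : ∀ i, n i → R) :
    (fun a : Σ i, n i => v a.1 a.2) ⬝ᵥ (fun a => w a.1 a.2) = ∑ i, v i ⬝ᵥ w i := by
  simp only [dotProduct, ← Finset.univ_sigma_univ, Finset.sum_sigma]

end Sigma

end Matrix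

open Matrix

theorem interMap_mulVec {N : ℕ} {m p : Fin N → ℕ} {pd me : ℕ}
    (M11 : ∀ i j, Matrix (Fin (m i)) (Fin (p j)) ℝ)
    (M12 : ∀ i, Matrix (Fin (m i)) (Fin pd) ℝ)
    (M21 : ∀ j, Matrix (Fin me) (Fin (p j)) ℝ)
    (M22 : Matrix (Fin me) (Fin pd) ℝ)
    (y : ∀ j, Fin (p j) → ℝ) (d : Fin pd → ℝ) :
    interMap M11 M12 M21 M22 *ᵥ Sum.elim (fun a : Σ j, Fin (p j) => y a.1 a.2) d =
      Sum.elim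
        (fun a : Σ i, Fin (m i + p i) =>
          Fin.append ((∑ j, M11 a.1 j *ᵥ y j) + M12 a.1 *ᵥ d) (y a.1) a.2)
        (Fin.append d ((∑ j, M21 j *ᵥ y j) + M22 *ᵥ d)) := by
  funext s
  rcases s with ⟨i, k⟩ | j
  · induction k using Fin.addCases with
    | left k => simp [interMap, mulVec, dotProduct, Fintype.sum_sum_type, Finset.sum_apply,
        ← Finset.univ_sigma_univ, Finset.sum_sigma]
    | right k => simp [interMap, mulVec, dotProduct, ite_mul]
  · induction j using Fin.addCases with
    | left j => simp [interMap, mulVec, dotProduct, ite_mul]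
    | right j => simp [interMap, mulVec, dotProduct, Fintype.sum_sum_type, Finset.sum_apply,
        ← Finset.univ_sigma_univ, Finset.sum_sigma]

theorem stmt_5_general {N : ℕ} {nx m p nη nz : Fin N → ℕ} {pd me nηW nzW : ℕ}
    (f : ∀ i, (Fin (nx i) → ℝ) → (Fin (m i) → ℝ) → (Fin (nx i) → ℝ))
    (h : ∀ i, (Fin (nx i) → ℝ) → (Fin (m i) → ℝ) → (Fin (p i) → ℝ))
    (M11 : ∀ i j, Matrix (Fin (m i)) (Fin (p j)) ℝ)
    (M12 : ∀ i, Matrix (Fin (m i)) (Fin pd) ℝ)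
    (M21 : ∀ j, Matrix (Fin me) (Fin (p j)) ℝ)
    (M22 : Matrix (Fin me) (Fin pd) ℝ)
    (Ai : ∀ i, Matrix (Fin (nη i)) (Fin (nη i)) ℝ)
    (Bi : ∀ i, Matrix (Fin (nη i)) (Fin (m i + p i)) ℝ)
    (Ci : ∀ i, Matrix (Fin (nz i)) (Fin (nη i)) ℝ)
    (Di : ∀ i, Matrix (Fin (nz i)) (Fin (m i + p i)) ℝ)
    (X : ∀ i, Matrix (Fin (nz i)) (Fin (nz i)) ℝ)
    (V : ∀ i, (Fin (nx i) → ℝ) × (Fin (nη i) → ℝ) → ℝ)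
    (hlocal : ∀ i (x : Fin (nx i) → ℝ) (η : Fin (nη i) → ℝ) (u : Fin (m i) → ℝ),
      fderiv ℝ (V i) (x, η)
        (f i x u, (Ai i) *ᵥ η + (Bi i) *ᵥ (Fin.append u (h i x u))) ≤
      ((Ci i) *ᵥ η + (Di i) *ᵥ (Fin.append u (h i x u))) ⬝ᵥ
        ((X i) *ᵥ ((Ci i) *ᵥ η + (Di i) *ᵥ (Fin.append u (h i x u)))))
    (AW : Matrix (Fin nηW) (Fin nηW) ℝ)
    (BW : Matrix (Fin nηW) (Fin (pd + me)) ℝ)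
    (CW : Matrix (Fin nzW) (Fin nηW) ℝ)
    (DW : Matrix (Fin nzW) (Fin (pd + me)) ℝ)
    (W : Matrix (Fin nzW) (Fin nzW) ℝ)
    (P : Matrix ((Σ i, Fin (nη i)) ⊕ Fin nηW) ((Σ i, Fin (nη i)) ⊕ Fin nηW) ℝ)
    (hP : P.PosSemidef)
    (hLMI : ∀ v : (((Σ i, Fin (nη i)) ⊕ Fin nηW) ⊕ ((Σ j, Fin (p j)) ⊕ Fin pd)) → ℝ,
      v ⬝ᵥ
        ((fromBlocks
            ((fromBlocks (blockDiagonal' Ai) 0 0 AW)ᵀ * P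
              + P * fromBlocks (blockDiagonal' Ai) 0 0 AW)
            (P * (fromBlocks (blockDiagonal' Bi) 0 0 BW * interMap M11 M12 M21 M22))
            ((fromBlocks (blockDiagonal' Bi) 0 0 BW * interMap M11 M12 M21 M22)ᵀ * P)
            0
          + (fromCols (fromBlocks (blockDiagonal' Ci) 0 0 CW)
                (fromBlocks (blockDiagonal' Di) 0 0 DW * interMap M11 M12 M21 M22))ᵀ
            * fromBlocks (blockDiagonal' X) 0 0 (-W)
            * fromCols (fromBlocks (blockDiagonal' Ci) 0 0 CW)
                (fromBlocks (blockDiagonal' Di) 0 0 DW * interMap M11 M12 M21 M22))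
          *ᵥ v) ≤ 0) :
    ∀ (x : ∀ i, Fin (nx i) → ℝ) (η : ∀ i, Fin (nη i) → ℝ) (ηW : Fin nηW → ℝ)
      (u : ∀ i, Fin (m i) → ℝ) (d : Fin pd → ℝ),
      (∀ i, u i = (∑ j, (M11 i j) *ᵥ (h j (x j) (u j))) + (M12 i) *ᵥ d) →
      2 * ((Sum.elim (fun a : Σ i, Fin (nη i) => η a.1 a.2) ηW) ⬝ᵥ
            (P *ᵥ
              ((fromBlocks (blockDiagonal' Ai) 0 0 AW) *ᵥ
                  (Sum.elim (fun a : Σ i, Fin (nη i) => η a.1 a.2) ηW)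
                + (fromBlocks (blockDiagonal' Bi) 0 0 BW * interMap M11 M12 M21 M22) *ᵥ
                  (Sum.elim (fun a : Σ j, Fin (p j) => h a.1 (x a.1) (u a.1) a.2) d))))
        + ∑ i, fderiv ℝ (V i) (x i, η i)
            (f i (x i) (u i),
              (Ai i) *ᵥ (η i) + (Bi i) *ᵥ (Fin.append (u i) (h i (x i) (u i)))) ≤
      (CW *ᵥ ηW + DW *ᵥ (Fin.append d ((∑ j, (M21 j) *ᵥ (h j (x j) (u j))) + M22 *ᵥ d))) ⬝ᵥ
        (W *ᵥ (CW *ᵥ ηW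
          + DW *ᵥ (Fin.append d ((∑ j, (M21 j) *ᵥ (h j (x j) (u j))) + M22 *ᵥ d)))) := by
  intro x η ηW u d hu
  set y : ∀ j, Fin (p j) → ℝ := fun j => h j (x j) (u j)
  set e := (∑ j, M21 j *ᵥ y j) + M22 *ᵥ d
  set uy : ∀ i, Fin (m i + p i) → ℝ := fun i => Fin.append (u i) (y i)
  set z : ∀ i, Fin (nz i) → ℝ := fun i => Ci i *ᵥ η i + Di i *ᵥ uy i
  have hT : interMap M11 M12 M21 M22 *ᵥ Sum.elim (fun a : Σ j, Fin (p j) => y a.1 a.2) d =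
      Sum.elim (fun a => uy a.1 a.2) (Fin.append d e) := by
    have hu' : ∀ i, (∑ j, M11 i j *ᵥ y j) + M12 i *ᵥ d = u i := fun i => (hu i).symm
    simp only [interMap_mulVec, hu']
    rfl
  have hz : fromCols (fromBlocks (blockDiagonal' Ci) 0 0 CW)
        (fromBlocks (blockDiagonal' Di) 0 0 DW * interMap M11 M12 M21 M22) *ᵥ
        Sum.elim (Sum.elim (fun a : Σ i, Fin (nη i) => η a.1 a.2) ηW)
          (Sum.elim (fun a : Σ j, Fin (p j) => y a.1 a.2) d) =
      Sum.elim (fun a => z a.1 a.2) (CW *ᵥ ηW + DW *ᵥ Fin.append d e) := by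
    rw [fromCols_mulVec_sumElim, ← mulVec_mulVec, hT, fromBlocks_zero_zero_mulVec_sumElim,
      fromBlocks_zero_zero_mulVec_sumElim, blockDiagonal'_mulVec_sigma,
      blockDiagonal'_mulVec_sigma, ← Sum.elim_add_add]
    rfl
  have hLMIv := hLMI (Sum.elim (Sum.elim (fun a : Σ i, Fin (nη i) => η a.1 a.2) ηW)
    (Sum.elim (fun a : Σ j, Fin (p j) => y a.1 a.2) d))
  rw [add_mulVec, dotProduct_add,
    (isHermitian_iff_isSymm.mp hP.1).sumElim_dotProduct_fromBlocks_mulVec_sumElim,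
    dotProduct_transpose_mul_mul_mulVec, hz,
    fromBlocks_zero_zero_mulVec_sumElim (blockDiagonal' X), sumElim_dotProduct_sumElim,
    blockDiagonal'_mulVec_sigma, sigma_dotProduct_sigma z fun i => X i *ᵥ z i, neg_mulVec,
    dotProduct_neg] at hLMIv
  have hV := Finset.sum_le_sum fun i (_ : i ∈ Finset.univ) => hlocal i (x i) (η i) (u i)
  linarith

/-- **Proposition 2 (compositional IQC certification).** `N` subsystems
`ẋᵢ = fᵢ(xᵢ,uᵢ)`, `yᵢ = hᵢ(xᵢ,uᵢ)` are interconnected by `u = M¹¹y + M¹²d`,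
`e = M²¹y + M²²d`. Each subsystem satisfies the IQC defined by the filter
`(Âᵢ,B̂ᵢ,Ĉᵢ,D̂ᵢ)` (driven by `[uᵢ;yᵢ]`, state `ηᵢ`) and symmetric `Xᵢ`, certified by a
nonnegative differentiable `Vᵢ(xᵢ,ηᵢ)` with `Vᵢ(0,0) = 0`. Let `(Â_W,B̂_W,Ĉ_W,D̂_W)` be
a global filter driven by `[d;e]`, `W` symmetric, and form
`Â = diag(Â₁,…,Â_N,Â_W)`, `Ĉ = diag(Ĉ₁,…,Ĉ_N,Ĉ_W)`, and
`B̂ = diag(B̂₁,…,B̂_N,B̂_W)∘T`, `D̂ = diag(D̂₁,…,D̂_N,D̂_W)∘T` where `T` is the map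
`(y,d) ↦ (u₁,y₁,…,u_N,y_N,d,e)`. If a PSD `P` satisfies the LMI
`[ÂᵀP + PÂ, PB̂; B̂ᵀP, 0] + [Ĉ D̂]ᵀ Q [Ĉ D̂] ⪯ 0` with `Q = diag(X₁,…,X_N,−W)`,
then along the interconnection
`2ηᵀP(Âη + B̂[y;d]) + ∑ᵢ d/dt Vᵢ ≤ (Ĉ_Wη_W + D̂_W[d;e])ᵀ W (Ĉ_Wη_W + D̂_W[d;e])`:
the nonnegative function `ηᵀPη + ∑ᵢVᵢ` certifies the global IQC defined by `Ψ_W`, `W`. -/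
theorem stmt_5 {N : ℕ} {nx m p nη nz : Fin N → ℕ} {pd me nηW nzW : ℕ}
    (f : ∀ i, (Fin (nx i) → ℝ) → (Fin (m i) → ℝ) → (Fin (nx i) → ℝ))
    (h : ∀ i, (Fin (nx i) → ℝ) → (Fin (m i) → ℝ) → (Fin (p i) → ℝ))
    (M11 : ∀ i j, Matrix (Fin (m i)) (Fin (p j)) ℝ)
    (M12 : ∀ i, Matrix (Fin (m i)) (Fin pd) ℝ)
    (M21 : ∀ j, Matrix (Fin me) (Fin (p j)) ℝ)
    (M22 : Matrix (Fin me) (Fin pd) ℝ)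
    (Ai : ∀ i, Matrix (Fin (nη i)) (Fin (nη i)) ℝ)
    (Bi : ∀ i, Matrix (Fin (nη i)) (Fin (m i + p i)) ℝ)
    (Ci : ∀ i, Matrix (Fin (nz i)) (Fin (nη i)) ℝ)
    (Di : ∀ i, Matrix (Fin (nz i)) (Fin (m i + p i)) ℝ)
    (X : ∀ i, Matrix (Fin (nz i)) (Fin (nz i)) ℝ)
    (hXsymm : ∀ i, (X i).IsSymm)
    (V : ∀ i, (Fin (nx i) → ℝ) × (Fin (nη i) → ℝ) → ℝ)
    (hVdiff : ∀ i, Differentiable ℝ (V i))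
    (hVnonneg : ∀ i xη, 0 ≤ V i xη)
    (hV0 : ∀ i, V i (0, 0) = 0)
    (hlocal : ∀ i (x : Fin (nx i) → ℝ) (η : Fin (nη i) → ℝ) (u : Fin (m i) → ℝ),
      fderiv ℝ (V i) (x, η)
        (f i x u, (Ai i) *ᵥ η + (Bi i) *ᵥ (Fin.append u (h i x u))) ≤
      ((Ci i) *ᵥ η + (Di i) *ᵥ (Fin.append u (h i x u))) ⬝ᵥ
        ((X i) *ᵥ ((Ci i) *ᵥ η + (Di i) *ᵥ (Fin.append u (h i x u)))))
    (AW : Matrix (Fin nηW) (Fin nηW) ℝ)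
    (BW : Matrix (Fin nηW) (Fin (pd + me)) ℝ)
    (CW : Matrix (Fin nzW) (Fin nηW) ℝ)
    (DW : Matrix (Fin nzW) (Fin (pd + me)) ℝ)
    (W : Matrix (Fin nzW) (Fin nzW) ℝ) (hWsymm : W.IsSymm)
    (P : Matrix ((Σ i, Fin (nη i)) ⊕ Fin nηW) ((Σ i, Fin (nη i)) ⊕ Fin nηW) ℝ)
    (hP : P.PosSemidef)
    (hLMI : ∀ v : (((Σ i, Fin (nη i)) ⊕ Fin nηW) ⊕ ((Σ j, Fin (p j)) ⊕ Fin pd)) → ℝ,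
      v ⬝ᵥ
        ((fromBlocks
            ((fromBlocks (blockDiagonal' Ai) 0 0 AW)ᵀ * P
              + P * fromBlocks (blockDiagonal' Ai) 0 0 AW)
            (P * (fromBlocks (blockDiagonal' Bi) 0 0 BW * interMap M11 M12 M21 M22))
            ((fromBlocks (blockDiagonal' Bi) 0 0 BW * interMap M11 M12 M21 M22)ᵀ * P)
            0
          + (fromCols (fromBlocks (blockDiagonal' Ci) 0 0 CW)
                (fromBlocks (blockDiagonal' Di) 0 0 DW * interMap M11 M12 M21 M22))ᵀ
            * fromBlocks (blockDiagonal' X) 0 0 (-W)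
            * fromCols (fromBlocks (blockDiagonal' Ci) 0 0 CW)
                (fromBlocks (blockDiagonal' Di) 0 0 DW * interMap M11 M12 M21 M22))
          *ᵥ v) ≤ 0) :
    ∀ (x : ∀ i, Fin (nx i) → ℝ) (η : ∀ i, Fin (nη i) → ℝ) (ηW : Fin nηW → ℝ)
      (u : ∀ i, Fin (m i) → ℝ) (d : Fin pd → ℝ),
      (∀ i, u i = (∑ j, (M11 i j) *ᵥ (h j (x j) (u j))) + (M12 i) *ᵥ d) →
      2 * ((Sum.elim (fun a : Σ i, Fin (nη i) => η a.1 a.2) ηW) ⬝ᵥ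
            (P *ᵥ
              ((fromBlocks (blockDiagonal' Ai) 0 0 AW) *ᵥ
                  (Sum.elim (fun a : Σ i, Fin (nη i) => η a.1 a.2) ηW)
                + (fromBlocks (blockDiagonal' Bi) 0 0 BW * interMap M11 M12 M21 M22) *ᵥ
                  (Sum.elim (fun a : Σ j, Fin (p j) => h a.1 (x a.1) (u a.1) a.2) d))))
        + ∑ i, fderiv ℝ (V i) (x i, η i)
            (f i (x i) (u i),
              (Ai i) *ᵥ (η i) + (Bi i) *ᵥ (Fin.append (u i) (h i (x i) (u i)))) ≤
      (CW *ᵥ ηW + DW *ᵥ (Fin.append d ((∑ j, (M21 j) *ᵥ (h j (x j) (u j))) + M22 *ᵥ d))) ⬝ᵥ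
        (W *ᵥ (CW *ᵥ ηW
          + DW *ᵥ (Fin.append d ((∑ j, (M21 j) *ᵥ (h j (x j) (u j))) + M22 *ᵥ d)))) :=
  stmt_5_general f h M11 M12 M21 M22 Ai Bi Ci Di X V hlocal AW BW CW DW W P hP hLMI
end

section
/- Consider N subsystems ẋ_i = f_i(x_i,u_i), y_i = h_i(x_i,u_i) interconnected through u = M¹¹y + M¹²d, e = M²¹y + M²²d, and real symmetric matrices X_1,…,X_N, W. Suppose (a) for each i there is a differentiable function V_i(x_i, x_i*) ≥ 0 with V_i(x*,x*) = 0 such that for all x_i, u_i and all equilibrium pairs (x_i*, u_i*) with f_i(x_i*,u_i*) = 0, ∇_{x_i}V_i(x_i,x_i*)ᵀ f_i(x_i,u_i) ≤ [u_i − u_i*; y_i − y_i*]ᵀ X_i [u_i − u_i*; y_i − y_i*], where y_i = h_i(x_i,u_i) and y_i* = h_i(x_i*,u_i*); and (b) for all y, d, with u = M¹¹y + M¹²d and e = M²¹y + M²²d, ∑_{i=1}^N [u_i;y_i]ᵀ X_i [u_i;y_i] ≤ [d;e]ᵀ W [d;e]. Then for all x_i, u_i, d and all equilibrium data x_i*,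 u_i*, d* satisfying f_i(x_i*,u_i*) = 0, y_i* = h_i(x_i*,u_i*), u* = M¹¹y* + M¹²d*, as well as y_i = h_i(x_i,u_i) and u = M¹¹y + M¹²d, one has ∑_{i=1}^N ∇_{x_i}V_i(x_i,x_i*)ᵀ f_i(x_i,u_i) ≤ [d − d*; e − e*]ᵀ W [d − d*; e − e*], where e = M²¹y + M²²d and e* = M²¹y* + M²²d*; that is, the interconnected system is equilibrium-independent dissipative with respect to the global supply rate, with storage function ∑_i V_i(x_i,x_i*). -/
open Matrix

/-- **EID extension of Proposition 1.** `N` subsystems `ẋᵢ = fᵢ(xᵢ,uᵢ)`,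
`yᵢ = hᵢ(xᵢ,uᵢ)` are interconnected by `u = M¹¹y + M¹²d`, `e = M²¹y + M²²d`
(blockwise). Suppose
(a) each subsystem is equilibrium-independent dissipative w.r.t. the supply rate
`[uᵢ−uᵢ*; yᵢ−yᵢ*]ᵀXᵢ[uᵢ−uᵢ*; yᵢ−yᵢ*]` with nonnegative differentiable (in the first
argument) storage function `Vᵢ(xᵢ, xᵢ*)`, `Vᵢ(x*,x*) = 0`, and
(b) for all `y, d`, `∑ᵢ [uᵢ;yᵢ]ᵀXᵢ[uᵢ;yᵢ] ≤ [d;e]ᵀW[d;e]`.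
Then for any equilibrium data `x*,u*,d*` consistent with the interconnection and any
trajectory data `x,u,d` consistent with the interconnection,
`∑ᵢ ∇_{xᵢ}Vᵢ(xᵢ,xᵢ*)ᵀfᵢ(xᵢ,uᵢ) ≤ [d−d*; e−e*]ᵀW[d−d*; e−e*]`: the interconnection is
EID w.r.t. the global supply rate with storage function `∑ᵢ Vᵢ(xᵢ,xᵢ*)`. -/
theorem stmt_6 {N : ℕ} {n m p : Fin N → ℕ} {pd me : ℕ}
    (f : ∀ i, (Fin (n i) → ℝ) → (Fin (m i) → ℝ) → (Fin (n i) → ℝ))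
    (h : ∀ i, (Fin (n i) → ℝ) → (Fin (m i) → ℝ) → (Fin (p i) → ℝ))
    (M11 : ∀ i j, Matrix (Fin (m i)) (Fin (p j)) ℝ)
    (M12 : ∀ i, Matrix (Fin (m i)) (Fin pd) ℝ)
    (M21 : ∀ j, Matrix (Fin me) (Fin (p j)) ℝ)
    (M22 : Matrix (Fin me) (Fin pd) ℝ)
    (X : ∀ i, Matrix (Fin (m i + p i)) (Fin (m i + p i)) ℝ)
    (W : Matrix (Fin (pd + me)) (Fin (pd + me)) ℝ)
    (hXsymm : ∀ i, (X i).IsSymm) (hWsymm : W.IsSymm)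
    (V : ∀ i, (Fin (n i) → ℝ) → (Fin (n i) → ℝ) → ℝ)
    (hVdiff : ∀ i xs, Differentiable ℝ (fun x => V i x xs))
    (hVnonneg : ∀ i x xs, 0 ≤ V i x xs)
    (hVeq : ∀ i xs, V i xs xs = 0)
    (hlocal : ∀ i (x : Fin (n i) → ℝ) (u : Fin (m i) → ℝ)
        (xs : Fin (n i) → ℝ) (us : Fin (m i) → ℝ), f i xs us = 0 →
      fderiv ℝ (fun z => V i z xs) x (f i x u) ≤
        (Fin.append (u - us) (h i x u - h i xs us)) ⬝ᵥ
          ((X i) *ᵥ (Fin.append (u - us) (h i x u - h i xs us))))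
    (hglobal : ∀ (y : ∀ j, Fin (p j) → ℝ) (d : Fin pd → ℝ),
      (∑ i, (Fin.append ((∑ j, (M11 i j) *ᵥ (y j)) + (M12 i) *ᵥ d) (y i)) ⬝ᵥ
          ((X i) *ᵥ (Fin.append ((∑ j, (M11 i j) *ᵥ (y j)) + (M12 i) *ᵥ d) (y i)))) ≤
        (Fin.append d ((∑ j, (M21 j) *ᵥ (y j)) + M22 *ᵥ d)) ⬝ᵥ
          (W *ᵥ (Fin.append d ((∑ j, (M21 j) *ᵥ (y j)) + M22 *ᵥ d)))) :
    ∀ (x : ∀ i, Fin (n i) → ℝ) (u : ∀ i, Fin (m i) → ℝ) (d : Fin pd → ℝ)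
      (xs : ∀ i, Fin (n i) → ℝ) (us : ∀ i, Fin (m i) → ℝ) (ds : Fin pd → ℝ),
      (∀ i, f i (xs i) (us i) = 0) →
      (∀ i, us i = (∑ j, (M11 i j) *ᵥ (h j (xs j) (us j))) + (M12 i) *ᵥ ds) →
      (∀ i, u i = (∑ j, (M11 i j) *ᵥ (h j (x j) (u j))) + (M12 i) *ᵥ d) →
      ∑ i, fderiv ℝ (fun z => V i z (xs i)) (x i) (f i (x i) (u i)) ≤
        (Fin.append (d - ds)
            (((∑ j, (M21 j) *ᵥ (h j (x j) (u j))) + M22 *ᵥ d)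
              - ((∑ j, (M21 j) *ᵥ (h j (xs j) (us j))) + M22 *ᵥ ds))) ⬝ᵥ
          (W *ᵥ (Fin.append (d - ds)
            (((∑ j, (M21 j) *ᵥ (h j (x j) (u j))) + M22 *ᵥ d)
              - ((∑ j, (M21 j) *ᵥ (h j (xs j) (us j))) + M22 *ᵥ ds)))) := by

  intro x u d xs us ds heq hus hu
  have key := hglobal (fun j => h j (x j) (u j) - h j (xs j) (us j)) (d - ds)
  have harg : ∀ i, (∑ j, (M11 i j) *ᵥ (h j (x j) (u j) - h j (xs j) (us j)))
      + (M12 i) *ᵥ (d - ds) = u i - us i := by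
    intro i
    simp only [Matrix.mulVec_sub, Finset.sum_sub_distrib]
    rw [hu i, hus i]
    abel
  have harg2 : (∑ j, (M21 j) *ᵥ (h j (x j) (u j) - h j (xs j) (us j))) + M22 *ᵥ (d - ds)
      = ((∑ j, (M21 j) *ᵥ (h j (x j) (u j))) + M22 *ᵥ d)
        - ((∑ j, (M21 j) *ᵥ (h j (xs j) (us j))) + M22 *ᵥ ds) := by
    simp only [Matrix.mulVec_sub, Finset.sum_sub_distrib]
    abel
  simp only [harg, harg2] at key
  refine le_trans ?_ key
  apply Finset.sum_le_sum
  intro i _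
  exact hlocal i (x i) (u i) (xs i) (us i) (heq i)
end

section
/- Let a, b, c > 0. The function V(x₁,x₂) = (ab/2)x₁⁴ + (ac/2)x₂⁴ + a x₂² satisfies V(x₁,x₂) ≥ 0 for all x₁,x₂, V(0,0) = 0, and for all x₁, x₂, u ∈ ℝ, 2ab x₁³ · x₂ + (2ac x₂³ + 2a x₂) · (−a x₂ − b x₁³ + u)/(1 + c x₂²) ≤ u² − a² x₂²; that is, V is a storage function certifying that the rational system ẋ₁ = x₂, ẋ₂ = (−a x₂ − b x₁³ + u)/(1 + c x₂²), y = x₂ is dissipative with respect to the supply rate u² − a²y², and hence has L₂-gain at most 1/a. -/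
/-- For `a, b, c > 0`, the function `V(x₁,x₂) = (ab/2)x₁⁴ + (ac/2)x₂⁴ + a x₂²` is a
storage function certifying that the rational system `ẋ₁ = x₂`,
`ẋ₂ = (−a x₂ − b x₁³ + u)/(1 + c x₂²)`, `y = x₂` is dissipative with respect to the
supply rate `u² − a²y²`: `V ≥ 0`, `V(0,0) = 0`, and the derivative of `V` along the
dynamics is at most `u² − a²x₂²`. -/
theorem stmt_10 (a b c : ℝ) (ha : 0 < a) (hb : 0 < b) (hc : 0 < c) :
    (∀ x₁ x₂ : ℝ, 0 ≤ a * b / 2 * x₁ ^ 4 + a * c / 2 * x₂ ^ 4 + a * x₂ ^ 2) ∧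
    (a * b / 2 * (0:ℝ) ^ 4 + a * c / 2 * (0:ℝ) ^ 4 + a * (0:ℝ) ^ 2 = 0) ∧
    (∀ x₁ x₂ u : ℝ,
      2 * a * b * x₁ ^ 3 * x₂
        + (2 * a * c * x₂ ^ 3 + 2 * a * x₂) * ((-(a * x₂) - b * x₁ ^ 3 + u) / (1 + c * x₂ ^ 2))
        ≤ u ^ 2 - a ^ 2 * x₂ ^ 2) := by
  refine ⟨?_, by ring, ?_⟩
  · intro x₁ x₂
    have h1 : 0 ≤ a * b / 2 * x₁ ^ 4 := by positivity
    have h2 : 0 ≤ a * c / 2 * x₂ ^ 4 := by positivity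
    have h3 : 0 ≤ a * x₂ ^ 2 := by positivity
    linarith
  · intro x₁ x₂ u
    have hd : (0:ℝ) < 1 + c * x₂ ^ 2 := by positivity
    have hkey : (2 * a * c * x₂ ^ 3 + 2 * a * x₂) * ((-(a * x₂) - b * x₁ ^ 3 + u) / (1 + c * x₂ ^ 2))
        = 2 * a * x₂ * (-(a * x₂) - b * x₁ ^ 3 + u) := by
      field_simp
      ring
    rw [hkey]
    nlinarith [sq_nonneg (u - a * x₂)]
end
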